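/- Let x, y be strings of length n, let 0 < d ≤ n, let 0 ≤ j₀ ≤ n - d, and let L = ⌊log₂ d⌋. With the FSM recursion initialized with D^{-1}[j₀] = true and D^{-1}[j] = false for j ≠ j₀, the value D^{L}[j₀ + d] is true if and only if x[j₀ .. j₀+d-1] = y[j₀ .. j₀+d-1]. -/
import Mathlib

/-- `x[a .. a+len-1]`. -/
def substr {α : Type*} (x : List α) (a len : ℕ) : List α := (x.drop a).take len

/-- `psum d m = Σ_{i=0}^{m-1} bit_i(d)·2^i`, i.e. the paper's `p(m-1)`. -/
def psum (d m : ℕ) : ℕ := ∑ i ∈ Finset.range m, if d.testBit i then 2 ^ i else 0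

/-- The FSM recursion on Boolean vectors. `Dvec x y d init i j` is the value
`D^{i-1}[j]`: `Dvec x y d init 0 = init` is the initialization `D^{-1}`, and
for each bit `i` of `d`, `D^i = D^{i-1}` if `bit_i(d) = 0`, while if
`bit_i(d) = 1` then `D^i` is the rightward shift by `2^i` of the pointwise
conjunction of `D^{i-1}` with `λ^i` (positions `< 2^i` becoming `false`):
`D^i[j] = D^{i-1}[j - 2^i] ∧ λ^i[j - 2^i]` for `j ≥ 2^i`, where
`λ^i[j] = (x[j..j+2^i-1] = y[j..j+2^i-1])`. -/
def Dvec {α : Type*} [DecidableEq α] (x y : List α) (d : ℕ) (init : ℕ → Bool) :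
    ℕ → ℕ → Bool
  | 0, j => init j
  | i + 1, j =>
      if d.testBit i then
        if 2 ^ i ≤ j then
          Dvec x y d init i (j - 2 ^ i) &&
            decide (substr x (j - 2 ^ i) (2 ^ i) = substr y (j - 2 ^ i) (2 ^ i))
        else false
      else Dvec x y d init i j

lemma psum_eq_mod (d m : ℕ) : psum d m = d % 2 ^ m := by
  induction m with
  | zero => simp [psum, Nat.mod_one]
  | succ m ih =>
    rw [psum, Finset.sum_range_succ, ← psum, ih, Nat.mod_pow_succ,
      Nat.testBit_eq_decide_div_mod_eq]
    rcases Nat.mod_two_eq_zero_or_one (d / 2 ^ m) with h | h <;> simp [h]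

lemma substr_length {α : Type*} (x : List α) (a len : ℕ) :
    (substr x a len).length = min len (x.length - a) := by
  simp [substr]

lemma substr_split {α : Type*} (x : List α) (a l₁ l₂ : ℕ) :
    substr x a (l₁ + l₂) = substr x a l₁ ++ substr x (a + l₁) l₂ := by
  simp [substr, List.take_add, List.drop_drop, Nat.add_comm]

lemma substr_split_iff {α : Type*} (x y : List α) (hxy : x.length = y.length)
    (a l₁ l₂ : ℕ) :
    substr x a (l₁ + l₂) = substr y a (l₁ + l₂) ↔
      (substr x a l₁ = substr y a l₁ ∧ substr x (a + l₁) l₂ = substr y (a + l₁) l₂) := by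
  rw [substr_split, substr_split]
  constructor
  · intro h
    exact List.append_inj h (by rw [substr_length, substr_length, hxy])
  · rintro ⟨h1, h2⟩; rw [h1, h2]

lemma Dvec_key {α : Type*} [DecidableEq α] (x y : List α) (hxy : x.length = y.length)
    (d j₀ : ℕ) : ∀ m j,
    Dvec x y d (fun j => decide (j = j₀)) m j = true ↔
      (j = j₀ + psum d m ∧ substr x j₀ (psum d m) = substr y j₀ (psum d m)) := by
  intro m
  induction m with
  | zero => intro j; simp [Dvec, psum, substr]
  | succ m ih =>
    intro j
    have hpsucc : psum d (m + 1) = psum d m + (if d.testBit m then 2 ^ m else 0) := by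
      rw [psum, Finset.sum_range_succ, ← psum]
    by_cases hb : d.testBit m
    · rw [hpsucc]
      simp only [hb, if_true, Dvec]
      by_cases hle : 2 ^ m ≤ j
      · simp only [hle, if_true, Bool.and_eq_true, decide_eq_true_eq, ih]
        rw [substr_split_iff x y hxy j₀ (psum d m) (2 ^ m)]
        constructor
        · rintro ⟨⟨hj, h1⟩, h2⟩
          have : j - 2 ^ m = j₀ + psum d m := hj
          exact ⟨by omega, h1, hj ▸ h2⟩
        · rintro ⟨hj, h1, h2⟩
          have hsub : j - 2 ^ m = j₀ + psum d m := by omega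
          exact ⟨⟨hsub, h1⟩, by rwa [hsub]⟩
      · rw [if_neg hle]
        simp only [Bool.false_eq_true, false_iff]
        rintro ⟨hj, -⟩; omega
    · rw [hpsucc]; simp [Dvec, hb, ih]

/-- Correctness for the Fixed Factor Matching (FFM) problem: with
`D^{-1}[j₀] = true` and `D^{-1}[j] = false` for `j ≠ j₀`, and
`L = ⌊log₂ d⌋`, `D^L[j₀ + d] = true` iff `x[j₀..j₀+d-1] = y[j₀..j₀+d-1]`
(here `D^L = Dvec x y d init (L+1)`). -/
theorem stmt8 {α : Type*} [DecidableEq α] (n d j₀ : ℕ) (x y : List α)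
    (hx : x.length = n) (hy : y.length = n) (hd0 : 0 < d) (hdn : d ≤ n)
    (hj : j₀ + d ≤ n) :
    Dvec x y d (fun j => decide (j = j₀)) (Nat.log2 d + 1) (j₀ + d) = true ↔
      substr x j₀ d = substr y j₀ d := by
  have hps : psum d (Nat.log2 d + 1) = d := by
    rw [psum_eq_mod]
    exact Nat.mod_eq_of_lt Nat.lt_log2_self
  rw [Dvec_key x y (by rw [hx, hy]) d j₀ (Nat.log2 d + 1) (j₀ + d), hps]
  simp
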